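/- arXiv:2605.25908 — 3 statements merged into one kernel-verified Lean document; each statement's English description precedes it below -/
import Mathlib

section
/- With P_j the type A₁ Macdonald polynomial and O_C the operator defined by O_C = O_A O_B - q^{-1/2} O_B O_A, where (O_A f)(z) = ((1-tz²)/(1-z²)) f(q^{1/2}z) + ((1-tz^{-2})/(1-z^{-2})) f(q^{-1/2}z) and (O_B f)(z) = (z+1/z)f(z), one has O_C P_j(z,z^{-1}) = q^{(j-1)/2} t (q-1) P_{j+1}(z,z^{-1}) - (q^{-(j+1)/2}(1-q)(1-q^j)(1-t²q^{j-1}))/((1-tq^j)(1-tq^{j-1})) · P_{j-1}(z,z^{-1}). -/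
/-!
Write `P_j(z, z⁻¹) = z ^ j S_j(z⁻²)`, where `S_j` is the polynomial whose coefficients are the
products in `macd`. Two coefficientwise identities for `S_j` carry the proof: a `q`-difference
equation saying that `P_j` is an eigenfunction of `O_A` with eigenvalue
`λ_j = t q^{j/2} + q^{-j/2}`, and the Pieri rule `(z + z⁻¹) P_j = P_{j+1} + B_j P_{j-1}`.
Hence `O_A O_B P_j = λ_{j+1} P_{j+1} + B_j λ_{j-1} P_{j-1}` and
`O_B O_A P_j = λ_j (P_{j+1} + B_j P_{j-1})`, so the coefficients of `O_C P_j` are `λ_{j+1} - q^{-1/2} λ_j = q^{(j-1)/2} t (q - 1)` and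
`B_j (λ_{j-1} - q^{-1/2} λ_j) = -q^{-(j+1)/2} (1 - q) B_j`.
-/

/-- The type `A₁` Macdonald polynomial. -/
noncomputable def macd {F : Type*} [Field F] (q t : F) (j : ℕ) (x1 x2 : F) : F :=
  x1 ^ j * ∑ n ∈ Finset.range (j + 1), (x2 / x1) ^ n *
    ∏ i ∈ Finset.range n,
      ((1 - q ^ (j - i)) * (1 - t * q ^ i)) /
        ((1 - t * q ^ (j - i - 1)) * (1 - q ^ (i + 1)))

/-- `(O_A f)(z)`, with `r = q^{1/2}`. -/
noncomputable def OA {F : Type*} [Field F] (t r : F) (f : F → F) (z : F) : F :=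
  ((1 - t * z ^ 2) / (1 - z ^ 2)) * f (r * z) +
    ((1 - t * (z⁻¹) ^ 2) / (1 - (z⁻¹) ^ 2)) * f (r⁻¹ * z)

/-- `(O_B f)(z) = (z + 1/z) f(z)`. -/
noncomputable def OB {F : Type*} [Field F] (f : F → F) (z : F) : F :=
  (z + z⁻¹) * f z

/-- `O_C = O_A O_B - q^{-1/2} O_B O_A`. -/
noncomputable def OC {F : Type*} [Field F] (t r : F) (f : F → F) (z : F) : F :=
  OA t r (OB f) z - r⁻¹ * OB (OA t r f) z

open Finset Polynomial

section

variable {F : Type*} [Field F] {q t r : F}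

noncomputable def macdCoeff (q t : F) (j n : ℕ) : F :=
  ∏ i ∈ range n,
    ((1 - q ^ (j - i)) * (1 - t * q ^ i)) / ((1 - t * q ^ (j - i - 1)) * (1 - q ^ (i + 1)))

@[simp]
lemma macdCoeff_zero (q t : F) (j : ℕ) : macdCoeff q t j 0 = 1 := prod_range_zero _

lemma macdCoeff_eq_zero_of_lt (q t : F) {j n : ℕ} (h : j < n) : macdCoeff q t j n = 0 :=
  prod_eq_zero (mem_range.2 h) (by simp)

lemma macdCoeff_succ_mul (hq : ∀ m : ℕ, 1 ≤ m → 1 - q ^ m ≠ 0)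
    (ht : ∀ m : ℕ, 1 - t * q ^ m ≠ 0) (n k : ℕ) :
    macdCoeff q t (n + k + 1) (n + 1) * ((1 - t * q ^ k) * (1 - q ^ (n + 1))) =
      macdCoeff q t (n + k + 1) n * ((1 - q ^ (k + 1)) * (1 - t * q ^ n)) := by
  rw [macdCoeff, prod_range_succ, ← macdCoeff, show n + k + 1 - n = k + 1 by omega,
    Nat.add_sub_cancel, mul_assoc,
    div_mul_cancel₀ _ (mul_ne_zero (ht k) (hq (n + 1) n.succ_pos))]

lemma macdCoeff_degree_succ_mul (hq : ∀ m : ℕ, 1 ≤ m → 1 - q ^ m ≠ 0)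
    (ht : ∀ m : ℕ, 1 - t * q ^ m ≠ 0) (n d : ℕ) :
    macdCoeff q t (n + d + 1) n * ((1 - q ^ (d + 1)) * (1 - t * q ^ (n + d))) =
      macdCoeff q t (n + d) n * ((1 - q ^ (n + d + 1)) * (1 - t * q ^ d)) := by
  induction n generalizing d with
  | zero => simp
  | succ n ih =>
    have ih' := ih (d + 1)
    have step₁ := macdCoeff_succ_mul hq ht n (d + 1)
    have step₀ := macdCoeff_succ_mul hq ht n d
    rw [show n + 1 + d = n + (d + 1) by omega]
    apply mul_right_cancel₀ (mul_ne_zero (ht (d + 1)) (hq (n + 1) n.succ_pos))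
    linear_combination (1 - q ^ (d + 1)) * (1 - t * q ^ (n + d + 1)) * step₁ +
      (1 - q ^ (d + 1)) * (1 - t * q ^ n) * ih' -
      (1 - q ^ (n + d + 2)) * (1 - t * q ^ (d + 1)) * step₀

lemma macdCoeff_self (hq : ∀ m : ℕ, 1 ≤ m → 1 - q ^ m ≠ 0)
    (ht : ∀ m : ℕ, 1 - t * q ^ m ≠ 0) (j : ℕ) : macdCoeff q t j j = 1 := by
  induction j with
  | zero => simp
  | succ j ih =>
    have step := macdCoeff_succ_mul hq ht j 0
    have deg := macdCoeff_degree_succ_mul hq ht j 0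
    simp only [add_zero, ih, zero_add, pow_zero, mul_one] at step deg
    apply mul_right_cancel₀ (mul_ne_zero (ht 0) (hq (j + 1) j.succ_pos))
    linear_combination step + deg

noncomputable def macdPieriCoeff (q t : F) (i : ℕ) : F :=
  ((1 - q ^ (i + 1)) * (1 - t ^ 2 * q ^ i)) / ((1 - t * q ^ (i + 1)) * (1 - t * q ^ i))

lemma macdCoeff_pieri (hq : ∀ m : ℕ, 1 ≤ m → 1 - q ^ m ≠ 0)
    (ht : ∀ m : ℕ, 1 - t * q ^ m ≠ 0) (i n : ℕ) :
    macdCoeff q t (i + 1) (n + 1) + macdCoeff q t (i + 1) n =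
      macdCoeff q t (i + 2) (n + 1) + macdPieriCoeff q t i * macdCoeff q t i n := by
  rcases le_or_gt n i with hn | hn
  · obtain ⟨d, rfl⟩ := Nat.exists_eq_add_of_le hn
    have step := macdCoeff_succ_mul hq ht n d
    have deg₀ := macdCoeff_degree_succ_mul hq ht n d
    have deg₁ := macdCoeff_degree_succ_mul hq ht (n + 1) d
    have hB : macdPieriCoeff q t (n + d) * ((1 - t * q ^ (n + d + 1)) * (1 - t * q ^ (n + d))) =
        (1 - q ^ (n + d + 1)) * (1 - t ^ 2 * q ^ (n + d)) :=
      div_mul_cancel₀ _ (mul_ne_zero (ht _) (ht _))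
    rw [show n + 1 + d = n + d + 1 by omega] at deg₁
    apply mul_right_cancel₀ (mul_ne_zero (mul_ne_zero (hq (d + 1) d.succ_pos) (ht (n + d + 1)))
      (mul_ne_zero (ht (n + d)) (ht d)))
    linear_combination -((1 - t * q ^ (n + d)) * q ^ d * (q - t)) * step -
      (1 - t * q ^ (n + d)) * (1 - t * q ^ d) * deg₁ +
      (1 - q ^ (d + 1)) * (1 - t ^ 2 * q ^ (n + d)) * deg₀ -
      macdCoeff q t (n + d) n * (1 - q ^ (d + 1)) * (1 - t * q ^ d) * hB
  · rw [macdCoeff_eq_zero_of_lt q t hn, macdCoeff_eq_zero_of_lt q t (by omega : i + 1 < n + 1),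
      mul_zero, add_zero, zero_add]
    rcases (Nat.succ_le_of_lt hn).eq_or_lt with rfl | hn'
    · simp [macdCoeff_self hq ht]
    · rw [macdCoeff_eq_zero_of_lt q t hn', macdCoeff_eq_zero_of_lt q t (by omega : i + 2 < n + 1)]

noncomputable def macdPoly (q t : F) (j : ℕ) : F[X] :=
  ∑ n ∈ range (j + 1), C (macdCoeff q t j n) * X ^ n

@[simp]
lemma coeff_macdPoly (q t : F) (j n : ℕ) : (macdPoly q t j).coeff n = macdCoeff q t j n := by
  simp only [macdPoly, finsetSum_coeff, coeff_C_mul_X_pow, sum_ite_eq, mem_range]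
  split_ifs with h
  · rfl
  · exact (macdCoeff_eq_zero_of_lt q t (by omega)).symm

lemma macd_inv_eq_eval (q t : F) (j : ℕ) (w : F) :
    macd q t j w w⁻¹ = w ^ j * (macdPoly q t j).eval (w⁻¹ ^ 2) := by
  rw [macd, macdPoly, eval_finsetSum]
  congr 1
  refine sum_congr rfl fun n _ => ?_
  rw [eval_mul, eval_C, eval_pow, eval_X, macdCoeff, div_eq_mul_inv, sq, mul_comm]

lemma macdPoly_pieri (hq : ∀ m : ℕ, 1 ≤ m → 1 - q ^ m ≠ 0)
    (ht : ∀ m : ℕ, 1 - t * q ^ m ≠ 0) (i : ℕ) :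
    (1 + X) * macdPoly q t (i + 1) =
      macdPoly q t (i + 2) + C (macdPieriCoeff q t i) * X * macdPoly q t i := by
  ext (_ | n)
  · simp
  · simp only [add_mul, one_mul, mul_assoc, coeff_add, coeff_X_mul, coeff_C_mul, coeff_macdPoly]
    exact macdCoeff_pieri hq ht i n

-- The eigenvalue equation for `O_A` at `v = q⁻¹ z⁻²`, cleared of denominators.
lemma macdPoly_functional_eq (hq : ∀ m : ℕ, 1 ≤ m → 1 - q ^ m ≠ 0)
    (ht : ∀ m : ℕ, 1 - t * q ^ m ≠ 0) (j : ℕ) :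
    (C q * X - C t) * C (q ^ j) * macdPoly q t j +
        (C (t * q) * X - 1) * (macdPoly q t j).comp (C (q ^ 2) * X) =
      C (t * q ^ j + 1) * (C q * X - 1) * (macdPoly q t j).comp (C q * X) := by
  ext (_ | n)
  all_goals simp only [sub_mul, mul_sub, mul_assoc, one_mul, mul_one, coeff_sub, coeff_add,
    coeff_C_mul, coeff_X_mul, coeff_X_mul_zero, comp_C_mul_X_coeff, coeff_macdPoly]
  · simp
    ring
  · rcases lt_or_ge n j with hn | hn
    · obtain ⟨k, rfl⟩ := Nat.exists_eq_add_of_lt hn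
      linear_combination q ^ (n + 1) * macdCoeff_succ_mul hq ht n k
    · rw [macdCoeff_eq_zero_of_lt q t (Nat.lt_succ_of_le hn)]
      rcases hn.eq_or_lt with rfl | hn'
      · ring
      · simp [macdCoeff_eq_zero_of_lt q t hn']

noncomputable def macdEigenvalue (t r : F) (j : ℕ) : F := t * r ^ j + r⁻¹ ^ j

lemma OA_macd (hr : r ^ 2 = q) (hr0 : r ≠ 0) (hq : ∀ m : ℕ, 1 ≤ m → 1 - q ^ m ≠ 0)
    (ht : ∀ m : ℕ, 1 - t * q ^ m ≠ 0) (j : ℕ) {z : F} (hz : z ≠ 0)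
    (hz1 : 1 - z ^ 2 ≠ 0) :
    OA t r (fun w => macd q t j w w⁻¹) z = macdEigenvalue t r j * macd q t j z z⁻¹ := by
  subst hr
  have h := congrArg (eval ((r * z)⁻¹ ^ 2)) (macdPoly_functional_eq hq ht j)
  simp only [eval_add, eval_mul, eval_sub, eval_C, eval_X, eval_one, eval_comp] at h
  rw [show r ^ 2 * (r * z)⁻¹ ^ 2 = z⁻¹ ^ 2 by field_simp,
    show (r ^ 2) ^ 2 * (r * z)⁻¹ ^ 2 = (r⁻¹ * z)⁻¹ ^ 2 by field_simp] at h
  have hz1' : z ^ 2 - 1 ≠ 0 := fun h0 => hz1 (by linear_combination -h0)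
  simp only [OA, macdEigenvalue, macd_inv_eq_eval, mul_pow, inv_pow, ← pow_mul] at h ⊢
  field_simp at h ⊢
  linear_combination (z ^ 2 - 1) * h

lemma OB_macd (hq : ∀ m : ℕ, 1 ≤ m → 1 - q ^ m ≠ 0)
    (ht : ∀ m : ℕ, 1 - t * q ^ m ≠ 0) (i : ℕ) {w : F} (hw : w ≠ 0) :
    OB (fun w => macd q t (i + 1) w w⁻¹) w =
      macd q t (i + 2) w w⁻¹ + macdPieriCoeff q t i * macd q t i w w⁻¹ := by
  have h := congrArg (eval (w⁻¹ ^ 2)) (macdPoly_pieri hq ht i)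
  simp only [eval_add, eval_mul, eval_one, eval_X, eval_C] at h
  simp only [OB, macd_inv_eq_eval]
  field_simp at h ⊢
  linear_combination w ^ (i + 1) * h

end

theorem OC_macd_general {F : Type*} [Field F] (q t r : F) (hr : r ^ 2 = q) (hr0 : r ≠ 0)
    (hq : ∀ m : ℕ, 1 ≤ m → 1 - q ^ m ≠ 0)
    (ht : ∀ m : ℕ, 1 - t * q ^ m ≠ 0)
    (j : ℕ) (hj : 1 ≤ j) (z : F) (hz : z ≠ 0)
    (hz1 : 1 - z ^ 2 ≠ 0) :
    OC t r (fun w => macd q t j w w⁻¹) z =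
      r ^ (j - 1) * t * (q - 1) * macd q t (j + 1) z z⁻¹ -
        ((r⁻¹) ^ (j + 1) * (1 - q) * (1 - q ^ j) * (1 - t ^ 2 * q ^ (j - 1))) /
          ((1 - t * q ^ j) * (1 - t * q ^ (j - 1))) * macd q t (j - 1) z z⁻¹ := by
  obtain ⟨i, rfl⟩ := Nat.exists_eq_add_of_le' hj
  set B := macdPieriCoeff q t i with hB
  set e := macdEigenvalue t r with he
  have pieri :
      (z + z⁻¹) * macd q t (i + 1) z z⁻¹ = macd q t (i + 2) z z⁻¹ + B * macd q t i z z⁻¹ :=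
    OB_macd hq ht i hz
  have OA_pieri : OA t r (OB fun w => macd q t (i + 1) w w⁻¹) z =
      OA t r (fun w => macd q t (i + 2) w w⁻¹) z +
        B * OA t r (fun w => macd q t i w w⁻¹) z := by
    simp only [OA, OB_macd hq ht i (mul_ne_zero hr0 hz),
      OB_macd hq ht i (mul_ne_zero (inv_ne_zero hr0) hz)]
    ring
  have gap_up : e (i + 2) - r⁻¹ * e (i + 1) = r ^ i * t * (q - 1) := by
    subst hr; simp only [he, macdEigenvalue, inv_pow]; field_simp; ring
  have gap_down : e i - r⁻¹ * e (i + 1) = -(r⁻¹ ^ (i + 2) * (1 - q)) := by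
    subst hr; simp only [he, macdEigenvalue, inv_pow]; field_simp; ring
  calc OC t r (fun w => macd q t (i + 1) w w⁻¹) z
      = (e (i + 2) - r⁻¹ * e (i + 1)) * macd q t (i + 2) z z⁻¹ +
          B * (e i - r⁻¹ * e (i + 1)) * macd q t i z z⁻¹ := by
        simp only [OC, OA_pieri, OB, OA_macd hr hr0 hq ht _ hz hz1]
        linear_combination -r⁻¹ * e (i + 1) * pieri
    _ = _ := by
        simp only [gap_up, gap_down, hB, macdPieriCoeff, Nat.add_sub_cancel]
        ring

/-- `O_C P_j(z,z⁻¹) = q^{(j-1)/2} t (q-1) P_{j+1}(z,z⁻¹)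
  - (q^{-(j+1)/2}(1-q)(1-q^j)(1-t²q^{j-1}))/((1-tq^j)(1-tq^{j-1})) P_{j-1}(z,z⁻¹)`,
with `r = q^{1/2}` (so `q^{(j-1)/2} = r^{j-1}`, `q^{-(j+1)/2} = r^{-(j+1)}`). -/
theorem OC_macd {F : Type*} [Field F] (q t r : F) (hr : r ^ 2 = q) (hr0 : r ≠ 0)
    (hq : ∀ m : ℕ, 1 ≤ m → 1 - q ^ m ≠ 0)
    (ht : ∀ m : ℕ, 1 - t * q ^ m ≠ 0)
    (j : ℕ) (hj : 1 ≤ j) (z : F) (hz : z ≠ 0)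
    (hz1 : 1 - z ^ 2 ≠ 0) (hz2 : 1 - (z⁻¹) ^ 2 ≠ 0)
    (hz3 : 1 - (r * z) ^ 2 ≠ 0) (hz4 : 1 - (r⁻¹ * z) ^ 2 ≠ 0) :
    OC t r (fun w => macd q t j w w⁻¹) z =
      r ^ (j - 1) * t * (q - 1) * macd q t (j + 1) z z⁻¹ -
        ((r⁻¹) ^ (j + 1) * (1 - q) * (1 - q ^ j) * (1 - t ^ 2 * q ^ (j - 1))) /
          ((1 - t * q ^ j) * (1 - t * q ^ (j - 1))) * macd q t (j - 1) z z⁻¹ :=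
  OC_macd_general q t r hr hr0 hq ht j hj z hz hz1
end

section
/- Suppose (λ, μ) is a pair of partitions such that for every a ≥ 1, μ_a ∉ {λ_{a+1} - j, λ_{a+1}-j+1, …, λ_a - j - 1}. If additionally μ₁ < λ₁ - j, then a contradiction follows; hence every such pair satisfies λ₁ ≤ μ₁ + j. -/
/-- Non-vanishing condition on the Nekrasov factor forces `λ₁ ≤ μ₁ + j`.
Partitions are modelled as 0-indexed weakly decreasing eventually-zero
sequences `l m : ℕ → ℕ` (so `l 0 = λ₁`, etc.). The hypothesis states that for
every `a`, `μ_{a+1} ∉ {λ_{a+2} - j, …, λ_{a+1} - j - 1}`, i.e.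
`¬(λ_{a+2} ≤ μ_{a+1} + j ∧ μ_{a+1} + j + 1 ≤ λ_{a+1})`. -/
theorem nekrasov_vanishing_bound (j : ℕ) (l m : ℕ → ℕ)
    (hl : ∀ a, l (a + 1) ≤ l a) (hm : ∀ a, m (a + 1) ≤ m a)
    (hlz : ∃ N, ∀ n ≥ N, l n = 0) (hmz : ∃ N, ∀ n ≥ N, m n = 0)
    (hcond : ∀ a, ¬(l (a + 1) ≤ m a + j ∧ m a + j + 1 ≤ l a)) :
    l 0 ≤ m 0 + j := by
  by_contra h
  push_neg at h
  have key : ∀ n, m n + j < l n := by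
    intro n
    induction n with
    | zero => exact h
    | succ k ih =>
      have h1 : ¬ l (k + 1) ≤ m k + j := fun hle => hcond k ⟨hle, ih⟩
      push_neg at h1
      exact lt_of_le_of_lt (Nat.add_le_add_right (hm k) j) h1
  obtain ⟨N, hN⟩ := hlz
  have := key N
  have hzero := hN N le_rfl
  omega
end

section
/- For every d ≥ 0 and j ≥ 0, the set of pairs of partitions (λ, μ) satisfying both λ₁ ≤ μ₁ + j and ∑_{i≥1} λ_{2i} + ∑_{i≥1} μ_{2i-1} ≤ d is finite. -/
lemma bdd_supp_finite (M B : ℕ) :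
    {f : ℕ → ℕ | (∀ n, f n ≤ B) ∧ ∀ n, M ≤ n → f n = 0}.Finite := by
  set S := {f : ℕ → ℕ | (∀ n, f n ≤ B) ∧ ∀ n, M ≤ n → f n = 0}
  have hinj : Set.InjOn (fun f (i : Fin M) => f i) S := by
    intro f hf g hg h
    funext n
    by_cases hn : n < M
    · exact congrFun h ⟨n, hn⟩
    · rw [hf.2 n (le_of_not_gt hn), hg.2 n (le_of_not_gt hn)]
  have himg : ((fun f (i : Fin M) => f i) '' S) ⊆
      Set.pi Set.univ (fun _ : Fin M => Set.Iic B) := by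
    rintro _ ⟨f, hf, rfl⟩ i _
    exact hf.1 i
  exact Set.Finite.of_finite_image
    ((Set.Finite.pi (fun _ => Set.finite_Iic B)).subset himg) hinj

/-- Finiteness of the set of pairs of partitions `(λ, μ)` with `λ₁ ≤ μ₁ + j` and
`∑_{i≥1} λ_{2i} + ∑_{i≥1} μ_{2i-1} ≤ d`. Partitions are modelled as 0-indexed
weakly decreasing eventually-zero sequences; in 0-indexed form the constraint on
degrees reads `∑_i λ(2i+1) + ∑_i μ(2i) ≤ d`. -/
theorem finitely_many_pairs (d j : ℕ) :
    {pm : (ℕ → ℕ) × (ℕ → ℕ) |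
      (∀ n, pm.1 (n + 1) ≤ pm.1 n) ∧ (∀ n, pm.2 (n + 1) ≤ pm.2 n) ∧
      (∃ N, ∀ n ≥ N, pm.1 n = 0) ∧ (∃ N, ∀ n ≥ N, pm.2 n = 0) ∧
      pm.1 0 ≤ pm.2 0 + j ∧
      (∑' i : ℕ, pm.1 (2 * i + 1)) + (∑' i : ℕ, pm.2 (2 * i)) ≤ d}.Finite := by
  apply Set.Finite.subset
    (Set.Finite.prod (bdd_supp_finite (2 * d + 1) (d + j)) (bdd_supp_finite (2 * d) d))
  rintro ⟨f, g⟩ ⟨hf, hg, ⟨N₁, hN₁⟩, ⟨N₂, hN₂⟩, hj, hsum⟩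
  dsimp only at hf hg hN₁ hN₂ hj hsum
  have hfa : Antitone f := antitone_nat_of_succ_le hf
  have hga : Antitone g := antitone_nat_of_succ_le hg
  -- summability
  have hsf : Summable (fun i : ℕ => f (2 * i + 1)) := by
    apply summable_of_ne_finset_zero (s := Finset.range N₁)
    intro i hi
    exact hN₁ _ (by simp only [Finset.mem_range, not_lt] at hi; omega)
  have hsg : Summable (fun i : ℕ => g (2 * i)) := by
    apply summable_of_ne_finset_zero (s := Finset.range (N₂ + 1))
    intro i hi
    exact hN₂ _ (by simp only [Finset.mem_range, not_lt] at hi; omega)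
  have hg0 : g 0 ≤ d := by
    have := Summable.le_tsum hsg 0 (fun _ _ => Nat.zero_le _)
    simp only [mul_zero] at this
    omega
  -- partial sums bounds
  have hfsum : ∑ i ∈ Finset.range (d + 1), f (2 * i + 1) ≤ d := by
    have := Summable.sum_le_tsum (Finset.range (d + 1)) (fun i _ => Nat.zero_le _) hsf
    omega
  have hgsum : ∑ i ∈ Finset.range (d + 1), g (2 * i) ≤ d := by
    have := Summable.sum_le_tsum (Finset.range (d + 1)) (fun i _ => Nat.zero_le _) hsg
    omega
  have hfz : f (2 * d + 1) = 0 := by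
    by_contra h
    have h1 : ∀ i ∈ Finset.range (d + 1), 1 ≤ f (2 * i + 1) := fun i hi => by
      have := hfa (show 2 * i + 1 ≤ 2 * d + 1 by
        simp only [Finset.mem_range] at hi; omega)
      omega
    have := Finset.sum_le_sum h1
    simp at this
    omega
  have hgz : g (2 * d) = 0 := by
    by_contra h
    have h1 : ∀ i ∈ Finset.range (d + 1), 1 ≤ g (2 * i) := fun i hi => by
      have := hga (show 2 * i ≤ 2 * d by
        simp only [Finset.mem_range] at hi; omega)
      omega
    have := Finset.sum_le_sum h1
    simp at this
    omega
  refine ⟨⟨fun n => ?_, fun n hn => ?_⟩, fun n => ?_, fun n hn => ?_⟩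
  · exact le_trans (hfa (Nat.zero_le n)) (by omega)
  · exact Nat.eq_zero_of_le_zero (hfz ▸ hfa hn)
  · exact le_trans (hga (Nat.zero_le n)) hg0
  · exact Nat.eq_zero_of_le_zero (hgz ▸ hga hn)
end
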